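/- arXiv:2512.17272 — 3 statements merged into one kernel-verified Lean document; each statement's English description precedes it below -/
import Mathlib

section
/- Let v = (v₁,v₂) : [0,1] → ℂ² be square integrable, and set c₁ = ∫₀¹|v₁(x)|²dx, c₂ = ∫₀¹|v₂(x)|²dx, c₁₂ = ∫₀¹ v₁(x)·conj(v₂(x)) dx, ‖v‖² = c₁ + c₂, and β₀ = (c₁ − c₂)² + 4|c₁₂|². Then the matrix 𝒱 = ∫₀¹ V(v(x))² dx is block diagonal: its (1,1) entry is c₁ + c₂, its lower-right 2×2 block is the Hermitian matrix with entries γ₁₁ = c₁, γ₁₂ = c₁₂, γ₂₁ = conj(c₁₂), γ₂₂ = c₂, and all other entries vanish. Moreover the eigenvalues of 𝒱 are β₃ = ‖v‖², β₂ = (‖v‖² + √β₀)/2 and β₁ = (‖v‖² − √β₀)/2, and they satisfy 0 ≤ β₁ ≤ β₂ ≤ β₃. -/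
/-!
Pointwise, `V(a)²` is block diagonal with blocks `‖a‖²` and the rank-one Hermitian matrix `a a*`,
so integrating entrywise gives `c₁ + c₂` and the Gram matrix of `v₁, v₂` in `L²(0,1)`. The Gram
block has trace `c₁ + c₂` and determinant `c₁ c₂ - |c₁₂|²`, so its eigenvalues are the roots
`β₁, β₂` of the quadratic formula. Cauchy–Schwarz in `L²` makes that determinant nonnegative,
i.e. `√β₀ ≤ c₁ + c₂`, which is exactly `0 ≤ β₁` and `β₂ ≤ β₃`.
-/

open MeasureTheory Complex Matrix

noncomputable section

/-- The 3×3 matrix `V(a) = [[0, a*],[a, 0]]` for `a = (a₁,a₂) ∈ ℂ²`. -/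
def Vmat (a₁ a₂ : ℂ) : Matrix (Fin 3) (Fin 3) ℂ :=
  !![0, (starRingEnd ℂ) a₁, (starRingEnd ℂ) a₂; a₁, 0, 0; a₂, 0, 0]

open ComplexConjugate

namespace MeasureTheory

variable {α : Type*} [MeasurableSpace α] {μ : Measure α} {f g : α → ℂ}

theorem MemLp.inner_toLp_eq_integral_mul_conj (hf : MemLp f 2 μ) (hg : MemLp g 2 μ) :
    inner ℂ (hg.toLp g) (hf.toLp f) = ∫ x, f x * conj (g x) ∂μ := by
  rw [L2.inner_def]
  refine integral_congr_ae ?_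
  filter_upwards [hf.coeFn_toLp, hg.coeFn_toLp] with x hfx hgx
  rw [RCLike.inner_apply', hfx, hgx, mul_comm]

theorem integral_mul_conj_self (f : α → ℂ) :
    ∫ x, f x * conj (f x) ∂μ = ((∫ x, ‖f x‖ ^ 2 ∂μ : ℝ) : ℂ) := by
  simp_rw [mul_conj']
  exact_mod_cast integral_complex_ofReal

theorem MemLp.norm_toLp_sq (hf : MemLp f 2 μ) : ‖hf.toLp f‖ ^ 2 = ∫ x, ‖f x‖ ^ 2 ∂μ := by
  rw [← ofReal_inj, ← integral_mul_conj_self, ← hf.inner_toLp_eq_integral_mul_conj hf,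
    inner_self_eq_norm_sq_to_K]
  norm_cast

theorem norm_integral_mul_conj_sq_le (hf : MemLp f 2 μ) (hg : MemLp g 2 μ) :
    ‖∫ x, f x * conj (g x) ∂μ‖ ^ 2 ≤ (∫ x, ‖f x‖ ^ 2 ∂μ) * ∫ x, ‖g x‖ ^ 2 ∂μ := by
  rw [← hf.inner_toLp_eq_integral_mul_conj hg, ← hf.norm_toLp_sq, ← hg.norm_toLp_sq, ← mul_pow,
    mul_comm]
  exact pow_le_pow_left₀ (norm_nonneg _) (norm_inner_le_norm _ _) 2

end MeasureTheory

theorem Vmat_mul_self (a₁ a₂ : ℂ) :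
    Vmat a₁ a₂ * Vmat a₁ a₂ =
      !![((‖a₁‖ ^ 2 + ‖a₂‖ ^ 2 : ℝ) : ℂ), 0, 0;
         0, ((‖a₁‖ ^ 2 : ℝ) : ℂ), a₁ * conj a₂;
         0, a₂ * conj a₁, ((‖a₂‖ ^ 2 : ℝ) : ℂ)] := by
  ext i j
  fin_cases i <;> fin_cases j <;>
    simp [Vmat, mul_apply, Fin.sum_univ_three, mul_conj', mul_comm]

theorem integral_Vmat_mul_self {α : Type*} [MeasurableSpace α] {μ : Measure α} {f g : α → ℂ}
    (hf : MemLp f 2 μ) (hg : MemLp g 2 μ) :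
    Matrix.of (fun i j => ∫ x, (Vmat (f x) (g x) * Vmat (f x) (g x)) i j ∂μ) =
      !![((∫ x, ‖f x‖ ^ 2 ∂μ : ℝ) : ℂ) + ((∫ x, ‖g x‖ ^ 2 ∂μ : ℝ) : ℂ), 0, 0;
         0, ((∫ x, ‖f x‖ ^ 2 ∂μ : ℝ) : ℂ), ∫ x, f x * conj (g x) ∂μ;
         0, conj (∫ x, f x * conj (g x) ∂μ), ((∫ x, ‖g x‖ ^ 2 ∂μ : ℝ) : ℂ)] := by
  have hf2 := hf.integrable_norm_pow two_ne_zero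
  have hg2 := hg.integrable_norm_pow two_ne_zero
  ext i j
  fin_cases i <;> fin_cases j <;>
    simp [Vmat_mul_self, ← integral_conj, mul_comm, integral_complex_ofReal, -ofReal_pow,
      -ofReal_add]
  rw [integral_add hf2 hg2, ofReal_add]

theorem spectrum_fin_three_block {K : Type*} [Field K] (s a b c d : K) :
    spectrum K !![s, 0, 0; 0, a, b; 0, c, d] =
      {x | (x - s) * ((x - a) * (x - d) - b * c) = 0} := by
  ext x
  have hdet : (algebraMap K (Matrix (Fin 3) (Fin 3) K) x - !![s, 0, 0; 0, a, b; 0, c, d]).det =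
      (x - s) * ((x - a) * (x - d) - b * c) := by
    simp [det_fin_three, Algebra.algebraMap_eq_smul_one, one_apply]
    ring
  rw [Set.mem_ofPred_eq, ← hdet, spectrum.mem_iff, isUnit_iff_isUnit_det, isUnit_iff_ne_zero,
    not_not]

theorem sub_mul_sub_sub_mul_conj_eq (a d : ℝ) (b x : ℂ) :
    (x - a) * (x - d) - b * conj b =
      (x - ((a + d + √((a - d) ^ 2 + 4 * ‖b‖ ^ 2)) / 2 : ℝ)) *
        (x - ((a + d - √((a - d) ^ 2 + 4 * ‖b‖ ^ 2)) / 2 : ℝ)) := by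
  have hsq : (√((a - d) ^ 2 + 4 * ‖b‖ ^ 2) : ℂ) ^ 2 = (a - d) ^ 2 + 4 * ‖b‖ ^ 2 := by
    exact_mod_cast Real.sq_sqrt (by positivity)
  rw [mul_conj']
  push_cast
  linear_combination (1 / 4 : ℂ) * hsq

theorem sqrt_sub_sq_add_le_add {a d t : ℝ} (ha : 0 ≤ a) (hd : 0 ≤ d) (ht : t ≤ a * d) :
    √((a - d) ^ 2 + 4 * t) ≤ a + d :=
  Real.sqrt_le_iff.2 ⟨by positivity, by nlinarith⟩

/-- For square-integrable `v = (v₁,v₂) : [0,1] → ℂ²`, the matrix `𝒱 = ∫₀¹ V(v(x))² dx`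
is block diagonal with (1,1)-entry `c₁ + c₂` and lower-right 2×2 block
`[[c₁, c₁₂],[conj c₁₂, c₂]]`; its eigenvalues are `β₃ = ‖v‖²`, `β₂ = (‖v‖² + √β₀)/2`,
`β₁ = (‖v‖² − √β₀)/2`, and `0 ≤ β₁ ≤ β₂ ≤ β₃`. -/
theorem statement2 (v₁ v₂ : ℝ → ℂ)
    (hv₁ : MemLp v₁ 2 (volume.restrict (Set.Ioc (0:ℝ) 1)))
    (hv₂ : MemLp v₂ 2 (volume.restrict (Set.Ioc (0:ℝ) 1)))
    (c₁ c₂ : ℝ) (c₁₂ : ℂ) (β₀ β₁ β₂ β₃ : ℝ)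
    (hc₁ : c₁ = ∫ x in (0:ℝ)..1, ‖v₁ x‖ ^ 2)
    (hc₂ : c₂ = ∫ x in (0:ℝ)..1, ‖v₂ x‖ ^ 2)
    (hc₁₂ : c₁₂ = ∫ x in (0:ℝ)..1, v₁ x * (starRingEnd ℂ) (v₂ x))
    (hβ₀ : β₀ = (c₁ - c₂) ^ 2 + 4 * ‖c₁₂‖ ^ 2)
    (hβ₃ : β₃ = c₁ + c₂)
    (hβ₂ : β₂ = ((c₁ + c₂) + Real.sqrt β₀) / 2)
    (hβ₁ : β₁ = ((c₁ + c₂) - Real.sqrt β₀) / 2)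
    (𝒱 : Matrix (Fin 3) (Fin 3) ℂ)
    (h𝒱 : ∀ i j, 𝒱 i j = ∫ x in (0:ℝ)..1, (Vmat (v₁ x) (v₂ x) * Vmat (v₁ x) (v₂ x)) i j) :
    𝒱 = !![((c₁ : ℂ) + (c₂ : ℂ)), 0, 0;
           0, (c₁ : ℂ), c₁₂;
           0, (starRingEnd ℂ) c₁₂, (c₂ : ℂ)] ∧
    spectrum ℂ 𝒱 = {((β₃ : ℝ) : ℂ), ((β₂ : ℝ) : ℂ), ((β₁ : ℝ) : ℂ)} ∧
    0 ≤ β₁ ∧ β₁ ≤ β₂ ∧ β₂ ≤ β₃ := by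
  simp only [intervalIntegral.integral_of_le zero_le_one] at hc₁ hc₂ hc₁₂ h𝒱
  have h𝒱_eq :
      𝒱 = !![((c₁ : ℂ) + (c₂ : ℂ)), 0, 0; 0, (c₁ : ℂ), c₁₂; 0, conj c₁₂, (c₂ : ℂ)] := by
    rw [hc₁, hc₂, hc₁₂, ← integral_Vmat_mul_self hv₁ hv₂]
    exact Matrix.ext h𝒱
  have hc₁_nonneg : 0 ≤ c₁ := hc₁ ▸ integral_nonneg fun _ => by positivity
  have hc₂_nonneg : 0 ≤ c₂ := hc₂ ▸ integral_nonneg fun _ => by positivity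
  have hc₁₂_le : ‖c₁₂‖ ^ 2 ≤ c₁ * c₂ := hc₁ ▸ hc₂ ▸ hc₁₂ ▸ norm_integral_mul_conj_sq_le hv₁ hv₂
  have hsqrt_le : √β₀ ≤ c₁ + c₂ := hβ₀ ▸ sqrt_sub_sq_add_le_add hc₁_nonneg hc₂_nonneg hc₁₂_le
  refine ⟨h𝒱_eq, ?_, ?_, ?_, ?_⟩
  · rw [h𝒱_eq, spectrum_fin_three_block]
    ext x
    simp [sub_mul_sub_sub_mul_conj_eq, hβ₀, hβ₁, hβ₂, hβ₃, sub_eq_zero]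
  · rw [hβ₁]; linarith
  · rw [hβ₁, hβ₂]; linarith [Real.sqrt_nonneg β₀]
  · rw [hβ₂, hβ₃]; linarith
end
end

section
/- Let v : [0,1] → ℂ² be integrable and λ ∈ ℂ. Then the Picard iterates satisfy, for every n ≥ 0 and x ∈ [0,1], the bound ‖yₙ(x,λ)‖ ≤ e^{x|Im λ|} · (∫₀ˣ |v(s)| ds)ⁿ / n!. Consequently, if v is square integrable with L²-norm ‖v‖, then ‖yₙ(x,λ)‖ ≤ e^{x|Im λ|} ‖v‖ⁿ / n!, the series y(x,λ) = Σ_{n≥0} yₙ(x,λ) converges absolutely, and ‖y(x,λ)‖ ≤ e^{x|Im λ| + ‖v‖}. -/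
open MeasureTheory Complex Matrix

attribute [local instance] Matrix.normedAddCommGroup Matrix.normedSpace

noncomputable section

/-- `J = diag(1,-1,-1)`. -/
def Jmat : Matrix (Fin 3) (Fin 3) ℂ := Matrix.diagonal ![1, -1, -1]

/-- Operator norm of a 3×3 complex matrix, acting on Euclidean `ℂ³`. -/
def opNorm (A : Matrix (Fin 3) (Fin 3) ℂ) : ℝ :=
  ‖Matrix.toEuclideanCLM (𝕜 := ℂ) (n := Fin 3) A‖

/-! In operator norm, `‖e^{iλtJ}‖ ≤ e^{|t| |Im λ|}` because `J` is diagonal with entries `±1`,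
`‖J‖ ≤ 1`, and `‖V(a)‖ ≤ |a|`. By induction on `n` the bound on `yₙ₊₁` then reduces to the scalar
identity `∫₀ˣ w Mⁿ = M(x)ⁿ⁺¹ / (n+1)` for `w = |v|` and its primitive `M`, which is the fundamental
theorem of calculus for the absolutely continuous function `Mⁿ⁺¹`. For square integrable `v`,
Cauchy–Schwarz on `[0,1]` gives `M(x) ≤ ‖v‖`, and the bounds sum to an exponential series. -/

open Set

namespace Matrix

variable {𝕜 n : Type*} [RCLike 𝕜] [Fintype n] [DecidableEq n]

def toEuclideanCLE : Matrix n n 𝕜 ≃L[𝕜] (EuclideanSpace 𝕜 n →L[𝕜] EuclideanSpace 𝕜 n) :=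
  LinearEquiv.toContinuousLinearEquiv (toEuclideanCLM (n := n) (𝕜 := 𝕜)).toAlgEquiv.toLinearEquiv

@[simp]
lemma toEuclideanCLE_apply (A : Matrix n n 𝕜) :
    toEuclideanCLE A = toEuclideanCLM (n := n) (𝕜 := 𝕜) A := rfl

lemma norm_toEuclideanCLM_intervalIntegral_le {f : ℝ → Matrix n n 𝕜} {g : ℝ → ℝ} {a b : ℝ}
    (hab : a ≤ b) (hg : IntervalIntegrable g volume a b)
    (h : ∀ s ∈ Ioc a b, ‖toEuclideanCLM (n := n) (𝕜 := 𝕜) (f s)‖ ≤ g s) :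
    ‖toEuclideanCLM (n := n) (𝕜 := 𝕜) (∫ s in a..b, f s)‖ ≤ ∫ s in a..b, g s := by
  have hcomm := toEuclideanCLE.integral_comp_comm (μ := volume.restrict (Ioc a b)) f
  rw [← toEuclideanCLE_apply, intervalIntegral.integral_of_le hab]
  -- `hcomm` sees `Matrix n n 𝕜` as a real normed space through a different (defeq) instance path
  erw [← hcomm]
  rw [← intervalIntegral.integral_of_le hab]
  exact intervalIntegral.norm_integral_le_of_norm_le hab (ae_of_all _ h) hg

lemma norm_toEuclideanCLM_tsum_le {f : ℕ → Matrix n n 𝕜} {c : ℕ → ℝ} (hc : Summable c)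
    (h : ∀ k, ‖toEuclideanCLM (n := n) (𝕜 := 𝕜) (f k)‖ ≤ c k) :
    ‖toEuclideanCLM (n := n) (𝕜 := 𝕜) (∑' k, f k)‖ ≤ ∑' k, c k := by
  have hs : Summable fun k ↦ ‖toEuclideanCLM (n := n) (𝕜 := 𝕜) (f k)‖ :=
    hc.of_nonneg_of_le (fun _ ↦ norm_nonneg _) h
  rw [← toEuclideanCLE_apply, toEuclideanCLE.map_tsum]
  exact (norm_tsum_le_tsum_norm hs).trans (hs.tsum_le_tsum h hc)

end Matrix

lemma opNorm_nonneg (A : Matrix (Fin 3) (Fin 3) ℂ) : 0 ≤ opNorm A := norm_nonneg _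

lemma opNorm_mul_le (A B : Matrix (Fin 3) (Fin 3) ℂ) : opNorm (A * B) ≤ opNorm A * opNorm B := by
  unfold opNorm
  rw [map_mul]
  exact norm_mul_le _ _

lemma opNorm_smul (c : ℂ) (A : Matrix (Fin 3) (Fin 3) ℂ) : opNorm (c • A) = ‖c‖ * opNorm A := by
  unfold opNorm
  rw [map_smul]
  exact norm_smul _ _

lemma opNorm_diagonal (d : Fin 3 → ℂ) : opNorm (diagonal d) = ‖d‖ :=
  l2_opNorm_diagonal d

lemma opNorm_Jmat_le : opNorm Jmat ≤ 1 := by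
  rw [Jmat, opNorm_diagonal, pi_norm_le_iff_of_nonneg zero_le_one]
  intro i
  fin_cases i <;> simp

lemma opNorm_exp_smul_Jmat_le (c : ℂ) : opNorm (NormedSpace.exp (c • Jmat)) ≤ Real.exp |c.re| := by
  rw [Jmat, ← diagonal_smul, exp_diagonal, opNorm_diagonal,
    pi_norm_le_iff_of_nonneg (Real.exp_nonneg _)]
  intro i
  rw [Pi.coe_exp, ← Complex.exp_eq_exp_ℂ, Complex.norm_exp, Real.exp_le_exp]
  fin_cases i
  · simpa using le_abs_self c.re
  · simpa using neg_le_abs c.re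
  · simpa using neg_le_abs c.re

lemma opNorm_exp_I_mul_smul_Jmat_le (lam : ℂ) (t : ℝ) :
    opNorm (NormedSpace.exp ((I * lam * t) • Jmat)) ≤ Real.exp (|t| * |lam.im|) := by
  refine (opNorm_exp_smul_Jmat_le _).trans_eq ?_
  simp [Complex.mul_re, abs_mul, mul_comm]

lemma opNorm_Vmat_le (a₁ a₂ : ℂ) : opNorm (Vmat a₁ a₂) ≤ √(‖a₁‖ ^ 2 + ‖a₂‖ ^ 2) := by
  refine ContinuousLinearMap.opNorm_le_bound _ (Real.sqrt_nonneg _) fun x ↦ ?_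
  refine (sq_le_sq₀ (norm_nonneg _) (by positivity)).mp ?_
  rw [mul_pow, Real.sq_sqrt (by positivity), EuclideanSpace.norm_sq_eq, EuclideanSpace.norm_sq_eq]
  simp only [Vmat, ofLp_toEuclideanCLM, mulVec, dotProduct, of_apply, cons_val', cons_val_fin_one,
    Fin.sum_univ_three, Fin.isValue, cons_val_zero, cons_val_one, cons_val, zero_mul, zero_add,
    add_zero, Complex.norm_mul]
  have hrow :
      ‖starRingEnd ℂ a₁ * x 1 + starRingEnd ℂ a₂ * x 2‖ ≤ ‖a₁‖ * ‖x 1‖ + ‖a₂‖ * ‖x 2‖ := by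
    simpa using norm_add_le (starRingEnd ℂ a₁ * x 1) (starRingEnd ℂ a₂ * x 2)
  nlinarith [sq_nonneg (‖a₁‖ * ‖x 2‖ - ‖a₂‖ * ‖x 1‖), norm_nonneg (starRingEnd ℂ a₁ * x 1 +
    starRingEnd ℂ a₂ * x 2), mul_nonneg (norm_nonneg a₁) (norm_nonneg (x 1)),
    mul_nonneg (norm_nonneg a₂) (norm_nonneg (x 2))]

lemma AbsolutelyContinuousOnInterval.pow_succ {f : ℝ → ℝ} {a b : ℝ}
    (hf : AbsolutelyContinuousOnInterval f a b) (n : ℕ) :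
    AbsolutelyContinuousOnInterval (fun t ↦ f t ^ (n + 1)) a b := by
  induction n with
  | zero => simpa using hf
  | succ n ih =>
    convert ih.fun_mul hf using 2 with t
    ring

theorem intervalIntegral.integral_mul_primitive_pow {w : ℝ → ℝ} {a b : ℝ}
    (hw : IntervalIntegrable w volume a b) (n : ℕ) :
    ∫ s in a..b, w s * (∫ u in a..s, w u) ^ n = (∫ u in a..b, w u) ^ (n + 1) / (n + 1) := by
  set M : ℝ → ℝ := fun t ↦ ∫ u in a..t, w u
  have hM : AbsolutelyContinuousOnInterval M a b :=
    hw.absolutelyContinuousOnInterval_intervalIntegral left_mem_uIcc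
  have hderiv : ∀ᵐ s, s ∈ uIoc a b →
      deriv (fun t ↦ M t ^ (n + 1)) s = (n + 1) * (w s * M s ^ n) := by
    filter_upwards [hw.ae_hasDerivAt_integral] with s hs hsab
    rw [((hs (uIoc_subset_uIcc hsab) a left_mem_uIcc).fun_pow (n + 1)).deriv]
    push_cast
    ring
  have hftc := (hM.pow_succ n).integral_deriv_eq_sub
  rw [integral_congr_ae hderiv, integral_const_mul] at hftc
  simp only [M, integral_same, ne_eq, Nat.add_eq_zero_iff, one_ne_zero, and_false,
    not_false_eq_true, zero_pow, sub_zero] at hftc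
  rw [← hftc]
  field_simp

lemma sq_integral_le_integral_sq {Ω : Type*} [MeasurableSpace Ω] {μ : Measure Ω}
    [IsProbabilityMeasure μ] {X : Ω → ℝ} (hX : MemLp X 2 μ) :
    (∫ ω, X ω ∂μ) ^ 2 ≤ ∫ ω, X ω ^ 2 ∂μ := by
  have := ProbabilityTheory.variance_nonneg X μ
  rw [ProbabilityTheory.variance_eq_sub hX] at this
  simpa using this

lemma opNorm_picard_integrand_le (lam a₁ a₂ : ℂ) (Y : Matrix (Fin 3) (Fin 3) ℂ) {s x : ℝ}
    (hsx : s ≤ x) :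
    opNorm (NormedSpace.exp ((I * lam * ((s : ℂ) - x)) • Jmat) * (Jmat * (Vmat a₁ a₂ * Y))) ≤
      Real.exp ((x - s) * |lam.im|) * (√(‖a₁‖ ^ 2 + ‖a₂‖ ^ 2) * opNorm Y) := by
  have hexp := opNorm_exp_I_mul_smul_Jmat_le lam (s - x)
  rw [abs_of_nonpos (sub_nonpos.2 hsx), neg_sub, ofReal_sub] at hexp
  refine (opNorm_mul_le _ _).trans (mul_le_mul hexp ?_ (opNorm_nonneg _) (Real.exp_nonneg _))
  calc opNorm (Jmat * (Vmat a₁ a₂ * Y)) ≤ 1 * (opNorm (Vmat a₁ a₂) * opNorm Y) :=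
        (opNorm_mul_le _ _).trans <| mul_le_mul opNorm_Jmat_le (opNorm_mul_le _ _)
          (opNorm_nonneg _) zero_le_one
    _ ≤ √(‖a₁‖ ^ 2 + ‖a₂‖ ^ 2) * opNorm Y := by
        rw [one_mul]
        exact mul_le_mul_of_nonneg_right (opNorm_Vmat_le a₁ a₂) (opNorm_nonneg _)

theorem opNorm_picardIterate_le (v₁ v₂ : ℝ → ℂ) (lam : ℂ)
    (hv : IntegrableOn (fun s ↦ √(‖v₁ s‖ ^ 2 + ‖v₂ s‖ ^ 2)) (Ioc 0 1))
    (y : ℕ → ℝ → Matrix (Fin 3) (Fin 3) ℂ)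
    (hy0 : ∀ x : ℝ, y 0 x = NormedSpace.exp ((-(I * lam * x)) • Jmat))
    (hyn : ∀ (n : ℕ) (x : ℝ), y (n + 1) x = I •
      ∫ s in (0 : ℝ)..x,
        NormedSpace.exp ((I * lam * (s - x)) • Jmat) * (Jmat * (Vmat (v₁ s) (v₂ s) * y n s)))
    (n : ℕ) {x : ℝ} (hx : x ∈ Icc (0 : ℝ) 1) :
    opNorm (y n x) ≤ Real.exp (x * |lam.im|) *
      (∫ s in (0 : ℝ)..x, √(‖v₁ s‖ ^ 2 + ‖v₂ s‖ ^ 2)) ^ n / n.factorial := by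
  set w : ℝ → ℝ := fun s ↦ √(‖v₁ s‖ ^ 2 + ‖v₂ s‖ ^ 2)
  set M : ℝ → ℝ := fun t ↦ ∫ s in (0 : ℝ)..t, w s
  induction n generalizing x with
  | zero =>
    have h := opNorm_exp_I_mul_smul_Jmat_le lam (-x)
    rw [abs_neg, abs_of_nonneg hx.1, ofReal_neg, mul_neg] at h
    simpa [hy0] using h
  | succ n ih =>
    obtain ⟨hx0, hx1⟩ := hx
    have hw : IntervalIntegrable w volume 0 x :=
      (intervalIntegrable_iff_integrableOn_Ioc_of_le hx0).2
        (hv.mono_set (Ioc_subset_Ioc_right hx1))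
    have hMn : ContinuousOn (fun t ↦ M t ^ n) (uIcc 0 x) :=
      (hw.absolutelyContinuousOnInterval_intervalIntegral left_mem_uIcc).continuousOn.pow n
    have hbound : ∀ s ∈ Ioc 0 x,
        opNorm (NormedSpace.exp ((I * lam * ((s : ℂ) - x)) • Jmat) *
          (Jmat * (Vmat (v₁ s) (v₂ s) * y n s))) ≤
          Real.exp (x * |lam.im|) / n.factorial * (w s * M s ^ n) := fun s hs ↦
      calc _ ≤ Real.exp ((x - s) * |lam.im|) * (w s * opNorm (y n s)) :=
            opNorm_picard_integrand_le lam _ _ _ hs.2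
        _ ≤ Real.exp ((x - s) * |lam.im|) *
              (w s * (Real.exp (s * |lam.im|) * M s ^ n / n.factorial)) := by
            gcongr
            exact ih ⟨hs.1.le, hs.2.trans hx1⟩
        _ = Real.exp (x * |lam.im|) / n.factorial * (w s * M s ^ n) := by
            rw [sub_mul, Real.exp_sub]
            field_simp
    rw [hyn, opNorm_smul, norm_I, one_mul]
    refine (norm_toEuclideanCLM_intervalIntegral_le hx0
      ((hw.mul_continuousOn hMn).const_mul _) hbound).trans_eq ?_
    rw [intervalIntegral.integral_const_mul, intervalIntegral.integral_mul_primitive_pow hw,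
      Nat.factorial_succ]
    push_cast
    field_simp

lemma intervalIntegral_sqrt_le_sqrt_intervalIntegral {v₁ v₂ : ℝ → ℂ}
    (h₁ : MemLp v₁ 2 (volume.restrict (Ioc 0 1))) (h₂ : MemLp v₂ 2 (volume.restrict (Ioc 0 1))) :
    ∫ s in (0 : ℝ)..1, √(‖v₁ s‖ ^ 2 + ‖v₂ s‖ ^ 2) ≤
      √(∫ s in (0 : ℝ)..1, (‖v₁ s‖ ^ 2 + ‖v₂ s‖ ^ 2)) := by
  have : IsProbabilityMeasure (volume.restrict (Ioc (0 : ℝ) 1)) := ⟨by simp⟩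
  have hsq : Integrable (fun s ↦ ‖v₁ s‖ ^ 2 + ‖v₂ s‖ ^ 2) (volume.restrict (Ioc 0 1)) :=
    h₁.norm.integrable_sq.add h₂.norm.integrable_sq
  have hmem : MemLp (fun s ↦ √(‖v₁ s‖ ^ 2 + ‖v₂ s‖ ^ 2)) 2 (volume.restrict (Ioc 0 1)) := by
    refine (memLp_two_iff_integrable_sq
      (Real.continuous_sqrt.comp_aestronglyMeasurable hsq.1)).2 (hsq.congr ?_)
    exact ae_of_all _ fun s ↦ (Real.sq_sqrt (by positivity)).symm
  rw [intervalIntegral.integral_of_le zero_le_one, intervalIntegral.integral_of_le zero_le_one]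
  refine (le_abs_self _).trans (Real.abs_le_sqrt ((sq_integral_le_integral_sq hmem).trans_eq ?_))
  exact integral_congr_ae (ae_of_all _ fun s ↦ Real.sq_sqrt (by positivity))

lemma hasSum_mul_pow_div_factorial (c K : ℝ) :
    HasSum (fun n : ℕ ↦ Real.exp c * K ^ n / n.factorial) (Real.exp (c + K)) := by
  rw [Real.exp_add]
  simpa only [mul_div_assoc, ← Real.exp_eq_exp_ℝ] using
    (NormedSpace.expSeries_div_hasSum_exp K).mul_left (Real.exp c)

/-- Bounds on the Picard iterates `yₙ`, and absolute convergence of the series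
`y = Σ yₙ` with the bound `‖y(x,λ)‖ ≤ e^{x|Im λ| + ‖v‖}`. -/
theorem statement3 (v₁ v₂ : ℝ → ℂ) (lam : ℂ)
    (hv : IntegrableOn (fun s => Real.sqrt (‖v₁ s‖ ^ 2 + ‖v₂ s‖ ^ 2)) (Set.Ioc (0:ℝ) 1))
    (y : ℕ → ℝ → Matrix (Fin 3) (Fin 3) ℂ)
    (hy0 : ∀ x : ℝ, y 0 x = NormedSpace.exp ((-(Complex.I * lam * x)) • Jmat))
    (hyn : ∀ (n : ℕ) (x : ℝ), y (n + 1) x = Complex.I •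
      ∫ s in (0:ℝ)..x,
        NormedSpace.exp ((Complex.I * lam * (s - x)) • Jmat) *
          (Jmat * (Vmat (v₁ s) (v₂ s) * y n s))) :
    (∀ (n : ℕ), ∀ x ∈ Set.Icc (0:ℝ) 1,
      opNorm (y n x) ≤ Real.exp (x * |lam.im|) *
        (∫ s in (0:ℝ)..x, Real.sqrt (‖v₁ s‖ ^ 2 + ‖v₂ s‖ ^ 2)) ^ n / n.factorial) ∧
    ((MemLp v₁ 2 (volume.restrict (Set.Ioc (0:ℝ) 1)) ∧
      MemLp v₂ 2 (volume.restrict (Set.Ioc (0:ℝ) 1))) →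
      ∀ x ∈ Set.Icc (0:ℝ) 1,
        (∀ n : ℕ, opNorm (y n x) ≤ Real.exp (x * |lam.im|) *
          Real.sqrt (∫ s in (0:ℝ)..1, (‖v₁ s‖ ^ 2 + ‖v₂ s‖ ^ 2)) ^ n / n.factorial) ∧
        Summable (fun n : ℕ => opNorm (y n x)) ∧
        opNorm (∑' n : ℕ, y n x) ≤
          Real.exp (x * |lam.im| + Real.sqrt (∫ s in (0:ℝ)..1, (‖v₁ s‖ ^ 2 + ‖v₂ s‖ ^ 2)))) := by
  have hbound := opNorm_picardIterate_le v₁ v₂ lam hv y hy0 hyn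
  refine ⟨fun n x hx ↦ hbound n hx, fun ⟨h₁, h₂⟩ x hx ↦ ?_⟩
  have hMK : ∫ s in (0 : ℝ)..x, √(‖v₁ s‖ ^ 2 + ‖v₂ s‖ ^ 2) ≤
      √(∫ s in (0 : ℝ)..1, (‖v₁ s‖ ^ 2 + ‖v₂ s‖ ^ 2)) :=
    (intervalIntegral.integral_mono_interval le_rfl hx.1 hx.2
      (ae_of_all _ fun _ ↦ Real.sqrt_nonneg _)
      ((intervalIntegrable_iff_integrableOn_Ioc_of_le zero_le_one).2 hv)).trans
      (intervalIntegral_sqrt_le_sqrt_intervalIntegral h₁ h₂)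
  have hbound' : ∀ n : ℕ, opNorm (y n x) ≤ Real.exp (x * |lam.im|) *
      √(∫ s in (0 : ℝ)..1, (‖v₁ s‖ ^ 2 + ‖v₂ s‖ ^ 2)) ^ n / n.factorial := fun n ↦
    (hbound n hx).trans (by
      gcongr
      exact intervalIntegral.integral_nonneg hx.1 fun _ _ ↦ Real.sqrt_nonneg _)
  have hsum := hasSum_mul_pow_div_factorial (x * |lam.im|)
    √(∫ s in (0 : ℝ)..1, (‖v₁ s‖ ^ 2 + ‖v₂ s‖ ^ 2))
  exact ⟨hbound', hsum.summable.of_nonneg_of_le (fun _ ↦ opNorm_nonneg _) hbound',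
    (norm_toEuclideanCLM_tsum_le hsum.summable hbound').trans_eq hsum.tsum_eq⟩
end
end

section
/- Let v : ℝ → ℂ² be continuous, λ ∈ ℂ, and let y : [0,1] → M₃(ℂ) be differentiable with y(0) = 𝟙₃ and iJ·y′(x) + V(v(x))·y(x) = λ·y(x) for all x ∈ [0,1]. Then det y(x) = e^{iλx} for every x ∈ [0,1]. -/
/-!
Writing the equation as `y' = A y` with `A = -i J (λ - V)` (using `J² = 1`), Liouville's formula
gives `(det y)' = tr A · det y`. Since `J V` has zero diagonal, `tr A = -i λ tr J = i λ`, so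
`det y` solves the scalar equation `g' = i λ g` with `g 0 = 1`.
-/

open MeasureTheory Complex Matrix

attribute [local instance] Matrix.normedAddCommGroup Matrix.normedSpace

noncomputable section

namespace Matrix

variable {n : Type*} [Fintype n] [DecidableEq n]

theorem sum_det_updateRow_mul {R : Type*} [CommRing R] (A M : Matrix n n R) :
    ∑ i, (M.updateRow i ((A * M) i)).det = A.trace * M.det := by
  have hrow : ∀ i, (A * M) i = ∑ k, A i k • M k := fun i => by
    ext j; simp [Matrix.mul_apply]
  simp only [hrow, det_updateRow_sum, smul_eq_mul, trace, diag, Finset.sum_mul]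

variable {𝕜 : Type*} [RCLike 𝕜]

def detContinuousAlternating : (n → 𝕜) [⋀^n]→L[𝕜] 𝕜 :=
  { (detRowAlternating : (n → 𝕜) [⋀^n]→ₗ[𝕜] 𝕜) with cont := continuous_id.matrix_det }

/-- Jacobi's formula. -/
theorem hasDerivAt_det {y : ℝ → Matrix n n 𝕜} {y' : Matrix n n 𝕜} {x : ℝ}
    (h : HasDerivAt y y' x) :
    HasDerivAt (fun t => (y t).det) (∑ i, ((y x).updateRow i (y' i)).det) x :=
  ((detContinuousAlternating.hasFDerivAt (y x)).restrictScalars ℝ |>.comp_hasDerivAt x h)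
    |>.congr_deriv (detContinuousAlternating.1.linearDeriv_apply (y x) y')

theorem hasDerivAt_det_of_hasDerivAt_mul {y : ℝ → Matrix n n 𝕜} {A : Matrix n n 𝕜} {x : ℝ}
    (h : HasDerivAt y (A * y x) x) :
    HasDerivAt (fun t => (y t).det) (A.trace * (y x).det) x :=
  (hasDerivAt_det h).congr_deriv (sum_det_updateRow_mul A (y x))

end Matrix

theorem eq_exp_mul_of_hasDerivAt {g : ℝ → ℂ} {c : ℂ} {a b : ℝ}
    (hg : ∀ x ∈ Set.Icc a b, HasDerivAt g (c * g x) x) :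
    ∀ x ∈ Set.Icc a b, g x = exp (c * (x - a)) * g a := by
  set h : ℝ → ℂ := fun t => exp (-(c * (t - a))) * g t
  have hh : ∀ x ∈ Set.Icc a b, HasDerivAt h 0 x := by
    intro x hx
    have hexponent : HasDerivAt (fun t : ℝ => -(c * ((t : ℂ) - a))) (-c) x := by
      have := (((ofRealCLM.hasDerivAt (x := x)).sub_const (a : ℂ)).const_mul c).neg
      simp only [ofRealCLM_apply, ofReal_one, mul_one] at this
      exact this
    exact (hexponent.cexp.mul (hg x hx)).congr_deriv (by ring)
  have hconst := constant_of_has_deriv_right_zero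
    (fun x hx => (hh x hx).continuousAt.continuousWithinAt)
    (fun x hx => (hh x (Set.mem_Icc_of_Ico hx)).hasDerivWithinAt)
  intro x hx
  have := hconst x hx
  simp only [h, sub_self, mul_zero, neg_zero, exp_zero, one_mul] at this
  rw [← this, ← mul_assoc, ← exp_add, add_neg_cancel, exp_zero, one_mul]

theorem eq_mul_of_I_smul_mul_add_mul_eq_smul {n : Type*} [Fintype n] [DecidableEq n]
    {J V Y Y' : Matrix n n ℂ} {lam : ℂ} (hJ : J * J = 1)
    (h : I • (J * Y') + V * Y = lam • Y) : Y' = (-I • (J * (lam • 1 - V))) * Y := by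
  have hJY : J * Y' = -I • ((lam • 1 - V) * Y) := by
    rw [sub_mul, smul_mul_assoc, one_mul, ← h, add_sub_cancel_right, smul_smul]
    simp
  calc Y' = J * (J * Y') := by rw [← Matrix.mul_assoc, hJ, Matrix.one_mul]
    _ = _ := by rw [hJY, Matrix.mul_smul, smul_mul_assoc, Matrix.mul_assoc]

theorem Jmat_mul_Jmat : Jmat * Jmat = 1 := by
  rw [Jmat, diagonal_mul_diagonal, ← diagonal_one, diagonal_eq_diagonal_iff]
  intro i; fin_cases i <;> simp

theorem trace_Jmat_mul_smul_one_sub_Vmat (lam a₁ a₂ : ℂ) :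
    (Jmat * (lam • 1 - Vmat a₁ a₂)).trace = -lam := by
  simp [Jmat, Vmat, trace_fin_three, Matrix.mul_apply, Fin.sum_univ_three]

theorem statement4_general (v₁ v₂ : ℝ → ℂ) (lam : ℂ)
    (y y' : ℝ → Matrix (Fin 3) (Fin 3) ℂ)
    (hderiv : ∀ x ∈ Set.Icc (0:ℝ) 1, HasDerivAt y (y' x) x)
    (h0 : y 0 = 1)
    (hode : ∀ x ∈ Set.Icc (0:ℝ) 1,
      Complex.I • (Jmat * y' x) + Vmat (v₁ x) (v₂ x) * y x = lam • y x) :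
    ∀ x ∈ Set.Icc (0:ℝ) 1, (y x).det = Complex.exp (Complex.I * lam * x) := by
  have hdet : ∀ x ∈ Set.Icc (0:ℝ) 1,
      HasDerivAt (fun t => (y t).det) (I * lam * (y x).det) x := by
    intro x hx
    have hlin := eq_mul_of_I_smul_mul_add_mul_eq_smul Jmat_mul_Jmat (hode x hx)
    have := hasDerivAt_det_of_hasDerivAt_mul (hlin ▸ hderiv x hx)
    rwa [trace_smul, trace_Jmat_mul_smul_one_sub_Vmat, smul_eq_mul, neg_mul_neg] at this
  intro x hx
  rw [eq_exp_mul_of_hasDerivAt hdet x hx, h0, det_one, mul_one, ofReal_zero, sub_zero]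

/-- If `y` solves `iJ·y′ + V(v)·y = λ·y` on `[0,1]` with `y(0) = 𝟙₃`, then
`det y(x) = e^{iλx}` for all `x ∈ [0,1]`. -/
theorem statement4 (v₁ v₂ : ℝ → ℂ) (hv₁ : Continuous v₁) (hv₂ : Continuous v₂) (lam : ℂ)
    (y y' : ℝ → Matrix (Fin 3) (Fin 3) ℂ)
    (hderiv : ∀ x ∈ Set.Icc (0:ℝ) 1, HasDerivAt y (y' x) x)
    (h0 : y 0 = 1)
    (hode : ∀ x ∈ Set.Icc (0:ℝ) 1,
      Complex.I • (Jmat * y' x) + Vmat (v₁ x) (v₂ x) * y x = lam • y x) :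
    ∀ x ∈ Set.Icc (0:ℝ) 1, (y x).det = Complex.exp (Complex.I * lam * x) :=
  statement4_general v₁ v₂ lam y y' hderiv h0 hode
end
end
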